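/- The single-variable integral for I_xx evaluates as ∫_{−2π/3}^{2π/3} −cos²t·(−2510 cos t + 547 cos 2t + 1129 cos 3t + 648 cos 4t + 181 cos 5t + 21 cos 6t − 1744) / (15360 cos⁸(t/2)·√(2 cos t + 1)) dt = (32/45)·E(3/4) − (2/45)·K(3/4), where K(m) = ∫₀^{π/2} 1/√(1 − m sin²θ) dθ and E(m) = ∫₀^{π/2} √(1 − m sin²θ) dθ. -/

import Mathlib

open Real

/-- Complete elliptic integral of the first kind. -/
noncomputable def ellipticK (m : ℝ) : ℝ :=
  ∫ θ in (0:ℝ)..(π/2), 1 / Real.sqrt (1 - m * Real.sin θ ^ 2)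

/-- Complete elliptic integral of the second kind. -/
noncomputable def ellipticE (m : ℝ) : ℝ :=
  ∫ θ in (0:ℝ)..(π/2), Real.sqrt (1 - m * Real.sin θ ^ 2)

/-!
Write `c = cos (t/2)`, `X = √(4c² - 1) = √(2 cos t + 1)`. On `(-2π/3, 2π/3)` the integrand is the
derivative of `Φ(t) = sin (t/2) · X · R(c) / (720 c⁷) + A(ψ(t)) / 2`, where `R` is an even polynomial
of degree 12, `A(u) = ∫₀ᵘ (32/45 √(1 - ¾ sin²θ) - 2/45 / √(1 - ¾ sin²θ)) dθ` and
`ψ(t) = arcsin ((2/√3) sin (t/2))`. The substitution `sin ψ = (2/√3) sin (t/2)` turns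
`1 - ¾ sin²ψ` into `c²` and `ψ'` into `c / X`, so `(A ∘ ψ)' = (32c² - 2) / (45 X)` is algebraic,
and the rest is a rational identity in `c` and `X`.

The integrand is nonnegative (its numerator is `-16 cos² t · Q(cos t)` with `Q` a sextic that is
negative on `[-1/2, 1]`), hence integrable, and the fundamental theorem of calculus applies.
At `t = ±2π/3` we have `c = 1/2`, so the algebraic part vanishes, and `ψ = ±π/2`; as `A` is odd,
the integral is `A(π/2) = 32/45 E(3/4) - 2/45 K(3/4)`.
-/

open Set intervalIntegral

noncomputable section

def ixxIntegrand (t : ℝ) : ℝ :=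
  -(Real.cos t ^ 2 *
      (-2510 * Real.cos t + 547 * Real.cos (2*t) + 1129 * Real.cos (3*t) +
        648 * Real.cos (4*t) + 181 * Real.cos (5*t) + 21 * Real.cos (6*t) - 1744)) /
    (15360 * Real.cos (t/2) ^ 8 * Real.sqrt (2 * Real.cos t + 1))

def ixxEllipticIntegrand (θ : ℝ) : ℝ :=
  32/45 * √(1 - 3/4 * sin θ ^ 2) - 2/45 * (1 / √(1 - 3/4 * sin θ ^ 2))

def ixxEllipticPrimitive (u : ℝ) : ℝ := ∫ θ in (0:ℝ)..u, ixxEllipticIntegrand θ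

def ixxAngle (t : ℝ) : ℝ := arcsin (2 / √3 * sin (t/2))

def ixxRational (c : ℝ) : ℝ :=
  (9 - 39*c^2 + 20*c^4 - 64*c^6 - 80*c^8 + 624*c^10 - 576*c^12) / (720 * c^7)

def ixxAlgebraicPart (t : ℝ) : ℝ :=
  sin (t/2) * (√(4 * cos (t/2) ^ 2 - 1) * ixxRational (cos (t/2)))

def ixxPrimitive (t : ℝ) : ℝ := ixxAlgebraicPart t + ixxEllipticPrimitive (ixxAngle t) / 2

end

lemma one_half_le_cos_of_abs_le {x : ℝ} (hx : |x| ≤ π/3) : 1/2 ≤ cos x := by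
  rw [← cos_abs, ← cos_pi_div_three]
  exact cos_le_cos_of_nonneg_of_le_pi (abs_nonneg x) (by linarith [pi_pos]) hx

lemma one_half_lt_cos_of_abs_lt {x : ℝ} (hx : |x| < π/3) : 1/2 < cos x := by
  rw [← cos_abs, ← cos_pi_div_three]
  exact cos_lt_cos_of_nonneg_of_le_pi (abs_nonneg x) (by linarith [pi_pos]) hx

lemma four_mul_sq_sub_one_pos {c : ℝ} (hc : 1/2 < c) : 0 < 4 * c ^ 2 - 1 := by
  nlinarith

lemma cos_eq_two_mul_cos_half_sq_sub_one (t : ℝ) : cos t = 2 * cos (t/2) ^ 2 - 1 := by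
  rw [← cos_two_mul, mul_div_cancel₀ t two_ne_zero]

lemma two_mul_cos_add_one_eq (t : ℝ) : 2 * cos t + 1 = 4 * cos (t/2) ^ 2 - 1 := by
  rw [cos_eq_two_mul_cos_half_sq_sub_one]; ring

lemma ixx_numerator_eq (t : ℝ) :
    -2510 * cos t + 547 * cos (2*t) + 1129 * cos (3*t) + 648 * cos (4*t) + 181 * cos (5*t) +
        21 * cos (6*t) - 1744 =
      16 * (42 * cos t ^ 6 + 181 * cos t ^ 5 + 261 * cos t ^ 4 + 56 * cos t ^ 3 - 232 * cos t ^ 2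
        - 312 * cos t - 104) := by
  have h5 : cos (5*t) = 2 * cos (3*t) * cos (2*t) - cos t := by
    have h := cos_add (3*t) (2*t)
    have h' := cos_sub (3*t) (2*t)
    rw [show 3*t + 2*t = 5*t by ring] at h
    rw [show 3*t - 2*t = t by ring] at h'
    linarith
  rw [h5, show 4*t = 2*(2*t) by ring, show 6*t = 2*(3*t) by ring, cos_two_mul (2*t),
    cos_two_mul (3*t), cos_two_mul, cos_three_mul]
  ring

lemma ixx_sextic_nonpos {c : ℝ} (h₁ : -1/2 ≤ c) (h₂ : c ≤ 1) :
    42*c^6 + 181*c^5 + 261*c^4 + 56*c^3 - 232*c^2 - 312*c - 104 ≤ 0 := by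
  have h := mul_nonneg (sub_nonneg.2 h₁) (sub_nonneg.2 h₂)
  nlinarith [sq_nonneg c, sq_nonneg (c + 1/2), sq_nonneg (c - 1), mul_nonneg h (sq_nonneg c)]

lemma ixxIntegrand_nonneg {t : ℝ} (ht : -1/2 ≤ cos t) : 0 ≤ ixxIntegrand t := by
  have := ixx_sextic_nonpos ht (cos_le_one t)
  rw [ixxIntegrand, ixx_numerator_eq]
  apply div_nonneg _ (by positivity)
  nlinarith [sq_nonneg (cos t)]

lemma HasDerivAt.sqrt_mul {u S : ℝ → ℝ} {u' S' x : ℝ} (hu : HasDerivAt u u' x) (hux : 0 < u x)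
    (hS : HasDerivAt S S' x) :
    HasDerivAt (fun y => √(u y) * S y) ((u' * S x + 2 * u x * S') / (2 * √(u x))) x := by
  refine ((hu.sqrt hux.ne').mul hS).congr_deriv ?_
  have := sqrt_pos.2 hux
  field_simp
  linear_combination 2 * S' * sq_sqrt hux.le

lemma hasDerivAt_sin_half_mul_comp_cos_half {F : ℝ → ℝ} {F' t : ℝ}
    (hF : HasDerivAt F F' (cos (t/2))) :
    HasDerivAt (fun t => sin (t/2) * F (cos (t/2)))
      ((cos (t/2) * F (cos (t/2)) - (1 - cos (t/2) ^ 2) * F') / 2) t := by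
  have hhalf : HasDerivAt (fun t : ℝ => t/2) (1/2) t := (hasDerivAt_id t).div_const 2
  refine (((hasDerivAt_sin _).comp t hhalf).mul
    (hF.comp t ((hasDerivAt_cos _).comp t hhalf))).congr_deriv ?_
  simp only [Function.comp_apply]
  linear_combination -F' / 2 * sin_sq_add_cos_sq (t/2)

lemma hasDerivAt_ixxRational {c : ℝ} (hc : c ≠ 0) :
    HasDerivAt ixxRational
      ((-63 + 195*c^2 - 60*c^4 + 64*c^6 - 80*c^8 + 1872*c^10 - 2880*c^12) / (720 * c^8)) c := by
  open Polynomial in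
  have hnum := Polynomial.hasDerivAt
    (9 - 39*X^2 + 20*X^4 - 64*X^6 - 80*X^8 + 624*X^10 - 576*X^12 : ℝ[X]) c
  simp only [eval_sub, eval_add, eval_ofNat, eval_mul, eval_pow, eval_X, derivative_sub,
    derivative_ofNat, derivative_mul, zero_mul, derivative_X_pow_succ, Nat.cast_one,
    map_add, map_one, pow_one, zero_add, zero_sub, Nat.cast_ofNat, eval_neg, eval_one, eval_C] at hnum
  refine (hnum.div ((hasDerivAt_pow 7 c).const_mul 720) (by positivity)).congr_deriv ?_
  field_simp
  ring

lemma hasDerivAt_ixxAlgebraicPart {t : ℝ} (hc : 1/2 < cos (t/2)) :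
    HasDerivAt ixxAlgebraicPart
      (ixxIntegrand t - (16 * cos (t/2) ^ 2 - 1) / (45 * √(4 * cos (t/2) ^ 2 - 1))) t := by
  set c := cos (t/2) with hc_def
  have hu := four_mul_sq_sub_one_pos hc
  have hF := HasDerivAt.sqrt_mul (((hasDerivAt_pow 2 c).const_mul 4).sub_const 1) hu
    (hasDerivAt_ixxRational (by positivity))
  refine (hasDerivAt_sin_half_mul_comp_cos_half hF).congr_deriv ?_
  have hX : 0 < √(4 * c ^ 2 - 1) := sqrt_pos.2 hu
  unfold ixxIntegrand ixxRational
  rw [ixx_numerator_eq, two_mul_cos_add_one_eq, cos_eq_two_mul_cos_half_sq_sub_one t, ← hc_def]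
  -- `X² = 4c² - 1` is needed only to put the term `c · X · R(c) / (720 c⁷)` over the denominator `X`.
  linear_combination (norm := (field_simp; ring))
    (9 - 39*c^2 + 20*c^4 - 64*c^6 - 80*c^8 + 624*c^10 - 576*c^12) /
      (1440 * c^6 * √(4 * c ^ 2 - 1)) * sq_sqrt hu.le

lemma sq_two_div_sqrt_three_mul (x : ℝ) : (2 / √3 * x) ^ 2 = 4/3 * x ^ 2 := by
  rw [mul_pow, div_pow, sq_sqrt zero_le_three]; ring

lemma abs_two_div_sqrt_three_mul_sin_half_lt {t : ℝ} (hc : 1/2 < cos (t/2)) :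
    |2 / √3 * sin (t/2)| < 1 := by
  rw [← sq_lt_one_iff_abs_lt_one, sq_two_div_sqrt_three_mul]
  nlinarith [sin_sq_add_cos_sq (t/2)]

lemma hasDerivAt_ixxAngle {t : ℝ} (hc : 1/2 < cos (t/2)) :
    HasDerivAt ixxAngle (cos (t/2) / √(4 * cos (t/2) ^ 2 - 1)) t := by
  have hx := abs_lt.1 (abs_two_div_sqrt_three_mul_sin_half_lt hc)
  have hinner : HasDerivAt (fun t => 2 / √3 * sin (t/2)) (2 / √3 * (cos (t/2) * (1/2))) t :=
    ((hasDerivAt_sin _).comp t ((hasDerivAt_id t).div_const 2)).const_mul _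
  refine ((hasDerivAt_arcsin hx.1.ne' hx.2.ne).comp t hinner).congr_deriv ?_
  have hu := four_mul_sq_sub_one_pos hc
  have h : 1 - (2 / √3 * sin (t/2)) ^ 2 = (4 * cos (t/2) ^ 2 - 1) / 3 := by
    rw [sq_two_div_sqrt_three_mul]; linear_combination (-4/3) * sin_sq_add_cos_sq (t/2)
  rw [h, sqrt_div hu.le]
  have := sqrt_pos.2 hu
  field_simp

lemma ixxEllipticIntegrand_ixxAngle {t : ℝ} (hc : 1/2 < cos (t/2)) :
    ixxEllipticIntegrand (ixxAngle t) = (32 * cos (t/2) ^ 2 - 2) / (45 * cos (t/2)) := by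
  have hx := abs_lt.1 (abs_two_div_sqrt_three_mul_sin_half_lt hc)
  have h : 1 - 3/4 * sin (ixxAngle t) ^ 2 = cos (t/2) ^ 2 := by
    rw [ixxAngle, sin_arcsin hx.1.le hx.2.le, sq_two_div_sqrt_three_mul]
    linear_combination -sin_sq_add_cos_sq (t/2)
  rw [ixxEllipticIntegrand, h, sqrt_sq (by linarith)]
  field_simp

lemma one_sub_three_fourths_mul_sin_sq_pos (θ : ℝ) : 0 < 1 - 3/4 * sin θ ^ 2 := by
  nlinarith [sin_sq_le_one θ]

lemma continuous_ixxEllipticIntegrand : Continuous ixxEllipticIntegrand := by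
  have h : Continuous fun θ => √(1 - 3/4 * sin θ ^ 2) := by fun_prop
  exact (continuous_const.mul h).sub (continuous_const.mul (continuous_const.div h
    fun θ => (sqrt_pos.2 (one_sub_three_fourths_mul_sin_sq_pos θ)).ne'))

lemma hasDerivAt_ixxEllipticPrimitive (u : ℝ) :
    HasDerivAt ixxEllipticPrimitive (ixxEllipticIntegrand u) u :=
  integral_hasDerivAt_right (continuous_ixxEllipticIntegrand.intervalIntegrable _ _)
    (continuous_ixxEllipticIntegrand.stronglyMeasurableAtFilter _ _)
    continuous_ixxEllipticIntegrand.continuousAt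

lemma hasDerivAt_ixxPrimitive {t : ℝ} (hc : 1/2 < cos (t/2)) :
    HasDerivAt ixxPrimitive (ixxIntegrand t) t := by
  refine ((hasDerivAt_ixxAlgebraicPart hc).add (((hasDerivAt_ixxEllipticPrimitive _).comp t
    (hasDerivAt_ixxAngle hc)).div_const 2)).congr_deriv ?_
  rw [ixxEllipticIntegrand_ixxAngle hc]
  have := sqrt_pos.2 (four_mul_sq_sub_one_pos hc)
  field_simp
  ring

lemma continuousOn_ixxPrimitive : ContinuousOn ixxPrimitive (Icc (-(2*π/3)) (2*π/3)) := by
  have hrat : ContinuousOn (fun t => ixxRational (cos (t/2))) (Icc (-(2*π/3)) (2*π/3)) := by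
    unfold ixxRational
    refine (Continuous.continuousOn (by fun_prop)).div (Continuous.continuousOn (by fun_prop))
      fun t ht => ?_
    have : 1/2 ≤ cos (t/2) :=
      one_half_le_cos_of_abs_le (abs_le.2 ⟨by linarith [ht.1], by linarith [ht.2]⟩)
    positivity
  have hangle : Continuous ixxAngle := continuous_arcsin.comp (by fun_prop)
  have hprim : Continuous ixxEllipticPrimitive :=
    continuous_primitive (fun _ _ => continuous_ixxEllipticIntegrand.intervalIntegrable _ _) 0
  exact ((Continuous.continuousOn (by fun_prop)).mul
    ((Continuous.continuousOn (by fun_prop)).mul hrat)).add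
    ((hprim.comp hangle).div_const 2).continuousOn

lemma ixxAlgebraicPart_eq_zero_of_cos_half {t : ℝ} (ht : cos (t/2) = 1/2) :
    ixxAlgebraicPart t = 0 := by
  rw [ixxAlgebraicPart, ht]; norm_num

lemma ixxAngle_two_pi_div_three : ixxAngle (2*π/3) = π/2 := by
  rw [ixxAngle, show 2*π/3/2 = π/3 by ring, sin_pi_div_three,
    div_mul_div_cancel₀ (sqrt_ne_zero'.2 zero_lt_three), div_self two_ne_zero, arcsin_one]

lemma ixxAngle_neg (t : ℝ) : ixxAngle (-t) = -ixxAngle t := by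
  rw [ixxAngle, ixxAngle, neg_div, sin_neg, mul_neg, arcsin_neg]

lemma integral_zero_neg_of_even {E : Type*} [NormedAddCommGroup E] [NormedSpace ℝ E]
    {f : ℝ → E} (hf : ∀ x, f (-x) = f x) (u : ℝ) :
    ∫ x in (0:ℝ)..-u, f x = -∫ x in (0:ℝ)..u, f x := by
  have h := integral_comp_neg (a := 0) (b := -u) f
  simp only [hf, neg_neg, neg_zero] at h
  rw [h, integral_symm]

lemma ixxEllipticPrimitive_neg (u : ℝ) : ixxEllipticPrimitive (-u) = -ixxEllipticPrimitive u :=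
  integral_zero_neg_of_even (fun θ => by simp only [ixxEllipticIntegrand, sin_neg, neg_sq]) u

lemma ixxEllipticPrimitive_pi_div_two :
    ixxEllipticPrimitive (π/2) = 32/45 * ellipticE (3/4) - 2/45 * ellipticK (3/4) := by
  have h : Continuous fun θ => √(1 - 3/4 * sin θ ^ 2) := by fun_prop
  have h' : Continuous fun θ => 1 / √(1 - 3/4 * sin θ ^ 2) := continuous_const.div h
    fun θ => (sqrt_pos.2 (one_sub_three_fourths_mul_sin_sq_pos θ)).ne'
  rw [ixxEllipticPrimitive, ellipticE, ellipticK, ← integral_const_mul, ← integral_const_mul,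
    ← integral_sub ((h.intervalIntegrable _ _).const_mul _) ((h'.intervalIntegrable _ _).const_mul _)]
  rfl

theorem oloid_Ixx_single_integral :
    ∫ t in (-(2*π/3))..(2*π/3),
        -(Real.cos t ^ 2 *
            (-2510 * Real.cos t + 547 * Real.cos (2*t) + 1129 * Real.cos (3*t) +
              648 * Real.cos (4*t) + 181 * Real.cos (5*t) + 21 * Real.cos (6*t) - 1744)) /
          (15360 * Real.cos (t/2) ^ 8 * Real.sqrt (2 * Real.cos t + 1)) =
      32/45 * ellipticE (3/4) - 2/45 * ellipticK (3/4) := by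
  have hab : -(2*π/3) ≤ 2*π/3 := by linarith [pi_pos]
  have hc : ∀ t ∈ Ioo (-(2*π/3)) (2*π/3), 1/2 < cos (t/2) := fun t ht =>
    one_half_lt_cos_of_abs_lt (abs_lt.2 ⟨by linarith [ht.1], by linarith [ht.2]⟩)
  have hderiv : ∀ t ∈ Ioo (-(2*π/3)) (2*π/3), HasDerivAt ixxPrimitive (ixxIntegrand t) t :=
    fun t ht => hasDerivAt_ixxPrimitive (hc t ht)
  have hint : IntervalIntegrable ixxIntegrand MeasureTheory.volume (-(2*π/3)) (2*π/3) :=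
    (intervalIntegrable_iff_integrableOn_Ioc_of_le hab).2 <|
      integrableOn_deriv_of_nonneg continuousOn_ixxPrimitive hderiv fun t ht =>
        ixxIntegrand_nonneg (by rw [cos_eq_two_mul_cos_half_sq_sub_one]; nlinarith [hc t ht])
  have hcos : cos (2*π/3/2) = 1/2 := by rw [show 2*π/3/2 = π/3 by ring, cos_pi_div_three]
  have hcos' : cos (-(2*π/3)/2) = 1/2 := by rw [neg_div, cos_neg, hcos]
  change ∫ t in (-(2*π/3))..(2*π/3), ixxIntegrand t = _
  rw [integral_eq_sub_of_hasDerivAt_of_le hab continuousOn_ixxPrimitive hderiv hint,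
    ixxPrimitive, ixxPrimitive, ixxAlgebraicPart_eq_zero_of_cos_half hcos,
    ixxAlgebraicPart_eq_zero_of_cos_half hcos', ixxAngle_neg, ixxAngle_two_pi_div_three,
    ixxEllipticPrimitive_neg, ixxEllipticPrimitive_pi_div_two]
  ring
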